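/- There exist 18 pairwise commuting matrices in SL_3(𝔽_7), one in each of the 18 sets [i,j] for (i,j) in the list (0,1),(0,2),(0,4),(1,0),(1,3),(1,5),(2,0),(2,5),(2,6),(3,1),(3,4),(4,0),(4,3),(4,6),(5,1),(5,2),(6,2),(6,4); that is, there is a choice of M_{(i,j)} ∈ [i,j] for each listed pair such that any two of the chosen matrices commute. -/
import Mathlib


open Matrix Polynomial

abbrev SL3 := Matrix.SpecialLinearGroup (Fin 3) (ZMod 7)

/-- The set `[i,j]` of matrices in `SL₃(𝔽₇)` with characteristic polynomial
`X³ - i·X² + j·X - 1`. -/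
def classSet (i j : ZMod 7) : Set SL3 :=
  {M : SL3 | M.val.charpoly = X ^ 3 - C i * X ^ 2 + C j * X - 1}

/-- The 18 pairs `(i,j)`. -/
def pairs : List (ZMod 7 × ZMod 7) :=
  [(0,1),(0,2),(0,4),(1,0),(1,3),(1,5),(2,0),(2,5),(2,6),
   (3,1),(3,4),(4,0),(4,3),(4,6),(5,1),(5,2),(6,2),(6,4)]


def tbl : List ((ZMod 7 × ZMod 7) × Matrix (Fin 3) (Fin 3) (ZMod 7)) :=
  [((0,1), !![0,0,1; 1,0,6; 0,1,0]),
   ((0,2), !![3,1,3; 3,2,5; 1,3,2]),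
   ((0,4), !![5,4,5; 5,1,6; 4,5,1]),
   ((1,0), !![5,0,3; 3,5,4; 0,3,5]),
   ((1,3), !![1,1,5; 5,0,3; 1,5,0]),
   ((1,5), !![4,2,2; 2,2,0; 2,2,2]),
   ((2,0), !![4,5,1; 1,6,4; 5,1,6]),
   ((2,5), !![0,6,1; 1,1,5; 6,1,1]),
   ((2,6), !![6,1,1; 1,5,0; 1,1,5]),
   ((3,1), !![6,4,2; 2,2,2; 4,2,2]),
   ((3,4), !![1,0,6; 6,1,1; 0,6,1]),
   ((4,0), !![1,3,2; 2,5,1; 3,2,5]),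
   ((4,3), !![5,2,2; 2,3,0; 2,2,3]),
   ((4,6), !![0,5,2; 2,2,3; 5,2,2]),
   ((5,1), !![0,1,0; 0,6,1; 1,0,6]),
   ((5,2), !![6,3,1; 1,3,2; 3,1,3]),
   ((6,2), !![2,0,5; 5,2,2; 0,5,2]),
   ((6,4), !![3,5,4; 4,5,1; 5,4,5])]

def Mat (p : ZMod 7 × ZMod 7) : Matrix (Fin 3) (Fin 3) (ZMod 7) :=
  (tbl.lookup p).getD 1

lemma hdet : ∀ p : ZMod 7 × ZMod 7, (Mat p).det = 1 := by decide

lemma charpoly_fin_three (M : Matrix (Fin 3) (Fin 3) (ZMod 7)) :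
    M.charpoly = X ^ 3 - C (M 0 0 + M 1 1 + M 2 2) * X ^ 2
      + C (M 0 0 * M 1 1 - M 0 1 * M 1 0 + M 0 0 * M 2 2 - M 0 2 * M 2 0
            + M 1 1 * M 2 2 - M 1 2 * M 2 1) * X - C M.det := by
  rw [Matrix.charpoly, Matrix.det_fin_three, Matrix.det_fin_three]
  simp [charmatrix_apply_eq, charmatrix_apply_ne, Matrix.charmatrix]
  ring

lemma key : ∀ p ∈ pairs,
    (Mat p 0 0 + Mat p 1 1 + Mat p 2 2 = p.1) ∧
    (Mat p 0 0 * Mat p 1 1 - Mat p 0 1 * Mat p 1 0 + Mat p 0 0 * Mat p 2 2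
      - Mat p 0 2 * Mat p 2 0 + Mat p 1 1 * Mat p 2 2 - Mat p 1 2 * Mat p 2 1 = p.2) := by
  decide

set_option maxRecDepth 20000 in
lemma hcomm : ∀ p ∈ pairs, ∀ q ∈ pairs, Mat p * Mat q = Mat q * Mat p := by decide

theorem exists_commuting_representatives :
    ∃ f : ZMod 7 × ZMod 7 → SL3,
      (∀ p ∈ pairs, f p ∈ classSet p.1 p.2) ∧
      (∀ p ∈ pairs, ∀ q ∈ pairs, Commute (f p) (f q)) := by
  refine ⟨fun p => ⟨Mat p, hdet p⟩, ?_, ?_⟩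
  · intro p hp
    obtain ⟨h1, h2⟩ := key p hp
    show (Mat p).charpoly = _
    rw [charpoly_fin_three, h1, h2, hdet p, Polynomial.C_1]
  · intro p hp q hq
    exact Subtype.ext (hcomm p hp q hq)
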